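/- arXiv:2009.12384 — 3 statements merged into one kernel-verified Lean document; each statement's English description precedes it below -/
import Mathlib

section
/- Let Ω ⊆ ℝ^d be an open bounded convex set and f : closure(Ω) × U → ℝ^d continuous, with U compact. Suppose there exists h > 0 such that for every x ∈ closure(Ω) there is u ∈ U with x + h·f(x,u) ∈ Ω. Then for every x on the boundary of Ω there exists u ∈ U such that f(x,u) ∈ int(T_{closure(Ω)}(x)). -/
/-!
If `x + h • v` lies in the open set `Ω`, then `v` lies in the open set `h⁻¹ • (Ω - x)`, which is
one of the sets whose union is the (pre-closure) tangent cone of `closure Ω` at `x`; hence `v` is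
an interior point of that cone.
-/

open Set Pointwise

section TangentCone

variable {E : Type*} [AddCommGroup E] [Module ℝ E]

theorem mem_inv_smul_image_sub_of_add_smul_mem {s : Set E} {x v : E} {t : ℝ} (ht : t ≠ 0)
    (hv : x + t • v ∈ s) : v ∈ t⁻¹ • ((fun y => y - x) '' s) :=
  ⟨t • v, ⟨x + t • v, hv, add_sub_cancel_left x _⟩, inv_smul_smul₀ ht v⟩

variable [TopologicalSpace E] [IsTopologicalAddGroup E] [ContinuousConstSMul ℝ E]

theorem IsOpen.inv_smul_image_sub {s : Set E} (hs : IsOpen s) (x : E) {t : ℝ} (ht : t ≠ 0) :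
    IsOpen (t⁻¹ • ((fun y => y - x) '' s)) :=
  ((Homeomorph.subRight x).isOpenMap s hs).smul₀ (inv_ne_zero ht)

theorem IsOpen.inv_smul_image_sub_subset_interior_tangentCone {s : Set E} (hs : IsOpen s)
    (x : E) {t : ℝ} (ht : 0 < t) :
    t⁻¹ • ((fun y => y - x) '' s) ⊆
      interior (closure (⋃ τ ∈ Ioi (0 : ℝ), τ⁻¹ • ((fun y => y - x) '' closure s))) := by
  refine interior_maximal (subset_closure.trans' ?_) (hs.inv_smul_image_sub x ht.ne')
  calc t⁻¹ • ((fun y => y - x) '' s)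
      ⊆ t⁻¹ • ((fun y => y - x) '' closure s) := smul_set_mono (image_mono subset_closure)
    _ ⊆ ⋃ τ ∈ Ioi (0 : ℝ), τ⁻¹ • ((fun y => y - x) '' closure s) :=
        subset_biUnion_of_mem (u := fun τ : ℝ => τ⁻¹ • ((fun y => y - x) '' closure s)) ht

end TangentCone

theorem stmt3_general {d m : ℕ} (Ω : Set (EuclideanSpace ℝ (Fin d)))
    (hΩo : IsOpen Ω)
    (U : Set (Fin m → ℝ))
    (f : EuclideanSpace ℝ (Fin d) → (Fin m → ℝ) → EuclideanSpace ℝ (Fin d))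
    (h : ℝ) (hh : 0 < h)
    (hUh : ∀ x ∈ closure Ω, ∃ u ∈ U, x + h • f x u ∈ Ω) :
    ∀ x ∈ frontier Ω, ∃ u ∈ U,
      f x u ∈ interior (closure (⋃ t ∈ Set.Ioi (0 : ℝ),
        t⁻¹ • ((fun y => y - x) '' closure Ω))) := by
  intro x hx
  obtain ⟨u, hu, hstep⟩ := hUh x (frontier_subset_closure hx)
  exact ⟨u, hu, hΩo.inv_smul_image_sub_subset_interior_tangentCone x hh
    (mem_inv_smul_image_sub_of_add_smul_mem hh.ne' hstep)⟩

theorem stmt3 {d m : ℕ} (Ω : Set (EuclideanSpace ℝ (Fin d)))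
    (hΩo : IsOpen Ω) (hΩb : Bornology.IsBounded Ω) (hΩc : Convex ℝ Ω)
    (U : Set (Fin m → ℝ)) (hU : IsCompact U)
    (f : EuclideanSpace ℝ (Fin d) → (Fin m → ℝ) → EuclideanSpace ℝ (Fin d))
    (hf : ContinuousOn (fun p : EuclideanSpace ℝ (Fin d) × (Fin m → ℝ) => f p.1 p.2)
      (closure Ω ×ˢ U))
    (h : ℝ) (hh : 0 < h)
    (hUh : ∀ x ∈ closure Ω, ∃ u ∈ U, x + h • f x u ∈ Ω) :
    ∀ x ∈ frontier Ω, ∃ u ∈ U,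
      f x u ∈ interior (closure (⋃ t ∈ Set.Ioi (0 : ℝ),
        t⁻¹ • ((fun y => y - x) '' closure Ω))) :=
  stmt3_general Ω hΩo U f h hh hUh
end

section
/- Assume λ > L_f. For any h ∈ (0, 1/λ], the equation v(x) = inf_{u ∈ U_h(x)} { (1−λh)·v(x + h·f(x,u)) + h·ℓ(x,u) }, x ∈ closure(Ω), has a unique bounded solution v_h, and v_h satisfies ‖v_h‖_∞ ≤ M_ℓ/λ. -/
open Set
open scoped lp ENNReal

/-!
The Bellman operator `T v x = inf_a (γ v(φ x a) + c x a)` is a `γ`-contraction for the sup norm,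
because an infimum of functions moves by at most the uniform distance between them. Extending
`T v` by zero off the state set makes `T` a self-map of the Banach space `ℓ^∞`, so it has a
unique fixed point; a bounded solution on the state set agrees with it because successors stay
in the state set. The a priori bound comes from `‖v‖ ≤ γ ‖v‖ + M`. For the scheme,
`γ = 1 - λh ∈ [0, 1)` and `M = h M_ℓ`, whence `M / (1 - γ) = M_ℓ / λ`.
-/

lemma csInf_image_le_csInf_image_add {ι : Type*} {A : Set ι} (hA : A.Nonempty) {p q : ι → ℝ}
    (hp : BddBelow (p '' A)) {δ : ℝ} (hpq : ∀ a ∈ A, p a ≤ q a + δ) :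
    sInf (p '' A) ≤ sInf (q '' A) + δ := by
  rw [← sub_le_iff_le_add]
  refine le_csInf (hA.image q) ?_
  rintro _ ⟨a, ha, rfl⟩
  rw [sub_le_iff_le_add]
  exact (csInf_le hp (mem_image_of_mem p ha)).trans (hpq a ha)

lemma abs_csInf_image_sub_csInf_image_le {ι : Type*} {A : Set ι} (hA : A.Nonempty)
    {p q : ι → ℝ} (hp : BddBelow (p '' A)) (hq : BddBelow (q '' A)) {δ : ℝ}
    (hpq : ∀ a ∈ A, |p a - q a| ≤ δ) : |sInf (p '' A) - sInf (q '' A)| ≤ δ := by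
  rw [abs_sub_le_iff, sub_le_iff_le_add', sub_le_iff_le_add']
  exact ⟨csInf_image_le_csInf_image_add hA hp fun a ha => by linarith [abs_le.1 (hpq a ha)],
    csInf_image_le_csInf_image_add hA hq fun a ha => by linarith [abs_le.1 (hpq a ha)]⟩

lemma lp.abs_apply_le_norm {X : Type*} (v : ℓ^∞(X, ℝ)) (x : X) : |v x| ≤ ‖v‖ :=
  lp.norm_apply_le_norm ENNReal.top_ne_zero v x

section Bellman

variable {X ι : Type*}

noncomputable def bellman (A : X → Set ι) (φ : X → ι → X) (c : X → ι → ℝ) (γ : ℝ)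
    (v : X → ℝ) (x : X) : ℝ :=
  sInf ((fun a => γ * v (φ x a) + c x a) '' A x)

variable {A : X → Set ι} {φ : X → ι → X} {c : X → ι → ℝ} {γ M B : ℝ} {v w : X → ℝ} {x : X}

lemma abs_discounted_cost_le (hγ : 0 ≤ γ) (hc : ∀ a ∈ A x, |c x a| ≤ M)
    (hv : ∀ a ∈ A x, |v (φ x a)| ≤ B) : ∀ a ∈ A x, |γ * v (φ x a) + c x a| ≤ γ * B + M :=
  fun a ha => calc
    |γ * v (φ x a) + c x a| ≤ γ * |v (φ x a)| + |c x a| := by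
      simpa [abs_mul, abs_of_nonneg hγ] using abs_add_le (γ * v (φ x a)) (c x a)
    _ ≤ γ * B + M := by gcongr; exacts [hv a ha, hc a ha]

lemma bddBelow_discounted_cost (hγ : 0 ≤ γ) (hc : ∀ a ∈ A x, |c x a| ≤ M)
    (hv : ∀ a ∈ A x, |v (φ x a)| ≤ B) :
    BddBelow ((fun a => γ * v (φ x a) + c x a) '' A x) := by
  refine ⟨-(γ * B + M), ?_⟩
  rintro _ ⟨a, ha, rfl⟩
  exact neg_le_of_abs_le (abs_discounted_cost_le hγ hc hv a ha)

lemma abs_bellman_le (hγ : 0 ≤ γ) (hA : (A x).Nonempty) (hc : ∀ a ∈ A x, |c x a| ≤ M)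
    (hv : ∀ a ∈ A x, |v (φ x a)| ≤ B) : |bellman A φ c γ v x| ≤ γ * B + M := by
  have hle := abs_discounted_cost_le hγ hc hv
  refine abs_le.2 ⟨le_csInf (hA.image _) ?_, ?_⟩
  · rintro _ ⟨a, ha, rfl⟩
    exact neg_le_of_abs_le (hle a ha)
  · obtain ⟨a, ha⟩ := hA
    exact (csInf_le (bddBelow_discounted_cost hγ hc hv) (mem_image_of_mem _ ha)).trans
      (abs_le.1 (hle a ha)).2

lemma abs_bellman_sub_le (hγ : 0 ≤ γ) (hA : (A x).Nonempty) (hc : ∀ a ∈ A x, |c x a| ≤ M)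
    {B' δ : ℝ} (hv : ∀ a ∈ A x, |v (φ x a)| ≤ B) (hw : ∀ a ∈ A x, |w (φ x a)| ≤ B')
    (hvw : ∀ a ∈ A x, |v (φ x a) - w (φ x a)| ≤ δ) :
    |bellman A φ c γ v x - bellman A φ c γ w x| ≤ γ * δ := by
  refine abs_csInf_image_sub_csInf_image_le hA (bddBelow_discounted_cost hγ hc hv)
    (bddBelow_discounted_cost hγ hc hw) fun a ha => ?_
  rw [add_sub_add_right_eq_sub, ← mul_sub, abs_mul, abs_of_nonneg hγ]
  exact mul_le_mul_of_nonneg_left (hvw a ha) hγ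

lemma bellman_congr (hvw : ∀ a ∈ A x, v (φ x a) = w (φ x a)) :
    bellman A φ c γ v x = bellman A φ c γ w x := by
  unfold bellman
  rw [image_congr fun a ha => by rw [hvw a ha]]

structure IsDiscountedProblem (S : Set X) (A : X → Set ι) (φ : X → ι → X) (c : X → ι → ℝ)
    (γ M : ℝ) : Prop where
  nonempty : ∀ x ∈ S, (A x).Nonempty
  mapsTo : ∀ x ∈ S, ∀ a ∈ A x, φ x a ∈ S
  abs_cost_le : ∀ x ∈ S, ∀ a ∈ A x, |c x a| ≤ M
  discount_nonneg : 0 ≤ γ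
  discount_lt_one : γ < 1

namespace IsDiscountedProblem

variable {S : Set X}

lemma cost_bound_nonneg (P : IsDiscountedProblem S A φ c γ M) (hx : x ∈ S) : 0 ≤ M := by
  obtain ⟨a, ha⟩ := P.nonempty x hx
  exact (abs_nonneg _).trans (P.abs_cost_le x hx a ha)

lemma abs_indicator_bellman_le (P : IsDiscountedProblem S A φ c γ M) (hv : ∀ y, |v y| ≤ B)
    (x : X) : |S.indicator (bellman A φ c γ v) x| ≤ max (γ * B + M) 0 := by
  by_cases hx : x ∈ S
  · rw [indicator_of_mem hx]
    exact (abs_bellman_le P.discount_nonneg (P.nonempty x hx) (P.abs_cost_le x hx)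
      fun a _ => hv _).trans (le_max_left _ _)
  · simp [hx]

variable (P : IsDiscountedProblem S A φ c γ M)

noncomputable def bellmanOp (v : ℓ^∞(X, ℝ)) : ℓ^∞(X, ℝ) :=
  ⟨S.indicator (bellman A φ c γ v), memℓp_infty ⟨max (γ * ‖v‖ + M) 0, by
    rintro _ ⟨x, rfl⟩
    exact P.abs_indicator_bellman_le (lp.abs_apply_le_norm v) x⟩⟩

lemma bellmanOp_apply (v : ℓ^∞(X, ℝ)) (x : X) :
    P.bellmanOp v x = S.indicator (bellman A φ c γ v) x :=
  rfl

lemma norm_bellmanOp_le (v : ℓ^∞(X, ℝ)) : ‖P.bellmanOp v‖ ≤ max (γ * ‖v‖ + M) 0 :=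
  lp.norm_le_of_forall_le (le_max_right _ _)
    (P.abs_indicator_bellman_le (lp.abs_apply_le_norm v))

lemma contractingWith_bellmanOp : ContractingWith ⟨γ, P.discount_nonneg⟩ P.bellmanOp := by
  refine ⟨P.discount_lt_one, LipschitzWith.of_dist_le_mul fun v w => ?_⟩
  rw [dist_eq_norm, dist_eq_norm]
  refine lp.norm_le_of_forall_le (mul_nonneg P.discount_nonneg (norm_nonneg _)) fun x => ?_
  by_cases hx : x ∈ S
  · simp only [lp.coeFn_sub, Pi.sub_apply, bellmanOp_apply, indicator_of_mem hx]
    exact abs_bellman_sub_le P.discount_nonneg (P.nonempty x hx) (P.abs_cost_le x hx)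
      (fun a _ => lp.abs_apply_le_norm v _) (fun a _ => lp.abs_apply_le_norm w _)
      fun a _ => by simpa using lp.abs_apply_le_norm (v - w) (φ x a)
  · simp only [lp.coeFn_sub, Pi.sub_apply, bellmanOp_apply, indicator_of_notMem hx, sub_zero,
      norm_zero]
    exact mul_nonneg P.discount_nonneg (norm_nonneg _)

noncomputable def value : ℓ^∞(X, ℝ) :=
  ContractingWith.fixedPoint P.bellmanOp P.contractingWith_bellmanOp

lemma isFixedPt_value : Function.IsFixedPt P.bellmanOp P.value :=
  ContractingWith.fixedPoint_isFixedPt P.contractingWith_bellmanOp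

lemma value_eq_bellman (hx : x ∈ S) : P.value x = bellman A φ c γ P.value x := by
  have := congrArg (fun u : ℓ^∞(X, ℝ) => u x) P.isFixedPt_value
  rwa [bellmanOp_apply, indicator_of_mem hx, eq_comm] at this

lemma abs_value_le (hx : x ∈ S) : |P.value x| ≤ M / (1 - γ) := by
  have hnorm : ‖P.value‖ ≤ γ * ‖P.value‖ + M := by
    have := P.norm_bellmanOp_le P.value
    rwa [P.isFixedPt_value, max_eq_left (add_nonneg
      (mul_nonneg P.discount_nonneg (norm_nonneg _)) (P.cost_bound_nonneg hx))] at this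
  refine (lp.abs_apply_le_norm _ x).trans ?_
  rw [le_div_iff₀ (sub_pos.2 P.discount_lt_one)]
  linarith

lemma eq_value_of_eq_bellman (hw : ∃ B, ∀ x ∈ S, |w x| ≤ B)
    (hfix : ∀ x ∈ S, w x = bellman A φ c γ w x) (hx : x ∈ S) : w x = P.value x := by
  obtain ⟨B, hB⟩ := hw
  let w' : ℓ^∞(X, ℝ) := ⟨S.indicator w, memℓp_infty ⟨max B 0, by
    rintro _ ⟨y, rfl⟩
    dsimp only
    by_cases hy : y ∈ S
    · rw [Real.norm_eq_abs, indicator_of_mem hy]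
      exact le_max_of_le_left (hB y hy)
    · simp [hy]⟩⟩
  have hw' : Function.IsFixedPt P.bellmanOp w' := by
    ext y
    by_cases hy : y ∈ S
    · simp only [bellmanOp_apply, w', indicator_of_mem hy]
      rw [hfix y hy]
      exact bellman_congr fun a ha => indicator_of_mem (P.mapsTo y hy a ha) w
    · simp [bellmanOp_apply, w', hy]
  have hw'v : w' = P.value := P.contractingWith_bellmanOp.fixedPoint_unique hw'
  simpa [w', hx] using congrArg (fun u : ℓ^∞(X, ℝ) => u x) hw'v

end IsDiscountedProblem

end Bellman

theorem stmt9_general {d m : ℕ} (Ω : Set (EuclideanSpace ℝ (Fin d)))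
    (U : Set (Fin m → ℝ))
    (f : EuclideanSpace ℝ (Fin d) → (Fin m → ℝ) → EuclideanSpace ℝ (Fin d))
    (ℓ : EuclideanSpace ℝ (Fin d) → (Fin m → ℝ) → ℝ)
    (Mℓ : ℝ)
    (hℓM : ∀ u ∈ U, ∀ x, |ℓ x u| ≤ Mℓ)
    (lam : ℝ) (hlam0 : 0 < lam)
    (h : ℝ) (hh : 0 < h) (hhl : h ≤ 1 / lam)
    (hne : ∀ x ∈ closure Ω, ∃ u ∈ U, x + h • f x u ∈ Ω) :
    ∃ vh : EuclideanSpace ℝ (Fin d) → ℝ,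
      (∀ x ∈ closure Ω, |vh x| ≤ Mℓ / lam) ∧
      (∀ x ∈ closure Ω, vh x =
        sInf ((fun a => (1 - lam * h) * vh (x + h • f x a) + h * ℓ x a) ''
          {a ∈ U | x + h • f x a ∈ Ω})) ∧
      (∀ w : EuclideanSpace ℝ (Fin d) → ℝ, (∃ M, ∀ x ∈ closure Ω, |w x| ≤ M) →
        (∀ x ∈ closure Ω, w x =
          sInf ((fun a => (1 - lam * h) * w (x + h • f x a) + h * ℓ x a) ''
            {a ∈ U | x + h • f x a ∈ Ω})) →
        ∀ x ∈ closure Ω, w x = vh x) := by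
  have P : IsDiscountedProblem (closure Ω) (fun x => {a ∈ U | x + h • f x a ∈ Ω})
      (fun x a => x + h • f x a) (fun x a => h * ℓ x a) (1 - lam * h) (h * Mℓ) :=
    { nonempty := hne
      mapsTo := fun _ _ _ ha => subset_closure ha.2
      abs_cost_le := fun x _ a ha => by
        rw [abs_mul, abs_of_pos hh]
        exact mul_le_mul_of_nonneg_left (hℓM a ha.1 x) hh.le
      discount_nonneg := sub_nonneg.2 (by rwa [le_div_iff₀ hlam0, mul_comm] at hhl)
      discount_lt_one := sub_lt_self 1 (mul_pos hlam0 hh) }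
  have hbound : h * Mℓ / (1 - (1 - lam * h)) = Mℓ / lam := by
    rw [sub_sub_cancel, mul_comm lam, mul_div_mul_left _ _ hh.ne']
  exact ⟨P.value, fun x hx => (P.abs_value_le hx).trans_eq hbound,
    fun x hx => P.value_eq_bellman hx, fun w hw hfix x hx => P.eq_value_of_eq_bellman hw hfix hx⟩

theorem stmt9 {d m : ℕ} (Ω : Set (EuclideanSpace ℝ (Fin d)))
    (hΩo : IsOpen Ω) (hΩb : Bornology.IsBounded Ω) (hΩc : Convex ℝ Ω)
    (U : Set (Fin m → ℝ)) (hU : IsCompact U)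
    (f : EuclideanSpace ℝ (Fin d) → (Fin m → ℝ) → EuclideanSpace ℝ (Fin d))
    (ℓ : EuclideanSpace ℝ (Fin d) → (Fin m → ℝ) → ℝ)
    (hfc : ContinuousOn (fun p : EuclideanSpace ℝ (Fin d) × (Fin m → ℝ) => f p.1 p.2)
      (closure Ω ×ˢ U))
    (hℓc : ContinuousOn (fun p : EuclideanSpace ℝ (Fin d) × (Fin m → ℝ) => ℓ p.1 p.2)
      (closure Ω ×ˢ U))
    (Lf Lℓ Mf Mℓ : ℝ)
    (hfL : ∀ u ∈ U, ∀ x y, ‖f x u - f y u‖ ≤ Lf * ‖x - y‖)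
    (hℓL : ∀ u ∈ U, ∀ x y, |ℓ x u - ℓ y u| ≤ Lℓ * ‖x - y‖)
    (hfM : ∀ u ∈ U, ∀ x, ‖f x u‖ ≤ Mf)
    (hℓM : ∀ u ∈ U, ∀ x, |ℓ x u| ≤ Mℓ)
    (lam : ℝ) (hlam : Lf < lam) (hlam0 : 0 < lam)
    (h : ℝ) (hh : 0 < h) (hhl : h ≤ 1 / lam)
    (hne : ∀ x ∈ closure Ω, ∃ u ∈ U, x + h • f x u ∈ Ω) :
    ∃ vh : EuclideanSpace ℝ (Fin d) → ℝ,
      (∀ x ∈ closure Ω, |vh x| ≤ Mℓ / lam) ∧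
      (∀ x ∈ closure Ω, vh x =
        sInf ((fun a => (1 - lam * h) * vh (x + h • f x a) + h * ℓ x a) ''
          {a ∈ U | x + h • f x a ∈ Ω})) ∧
      (∀ w : EuclideanSpace ℝ (Fin d) → ℝ, (∃ M, ∀ x ∈ closure Ω, |w x| ≤ M) →
        (∀ x ∈ closure Ω, w x =
          sInf ((fun a => (1 - lam * h) * w (x + h • f x a) + h * ℓ x a) ''
            {a ∈ U | x + h • f x a ∈ Ω})) →
        ∀ x ∈ closure Ω, w x = vh x) :=
  stmt9_general Ω U f ℓ Mℓ hℓM lam hlam0 h hh hhl hne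
end

section
/- For a fixed h > 0, the set-valued map x ↦ U_h(x) = {u ∈ U : x + h·f(x,u) ∈ Ω}, defined on closure(Ω), is lower semicontinuous: for every x, every u_x ∈ U_h(x), and every ε > 0, there exists a neighborhood I(x) of x such that for all y ∈ I(x) ∩ closure(Ω) there exists u_y ∈ U_h(y) with |u_y − u_x| < ε. -/
open Set

theorem stmt13 {d m : ℕ} (Ω : Set (EuclideanSpace ℝ (Fin d)))
    (hΩo : IsOpen Ω)
    (U : Set (Fin m → ℝ)) (hU : IsCompact U)
    (f : EuclideanSpace ℝ (Fin d) → (Fin m → ℝ) → EuclideanSpace ℝ (Fin d))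
    (hf : ContinuousOn (fun p : EuclideanSpace ℝ (Fin d) × (Fin m → ℝ) => f p.1 p.2)
      (closure Ω ×ˢ U))
    (h : ℝ) (hh : 0 < h) :
    ∀ x ∈ closure Ω, ∀ u ∈ U, x + h • f x u ∈ Ω → ∀ ε > (0 : ℝ),
      ∃ δ > (0 : ℝ), ∀ y ∈ closure Ω, ‖y - x‖ < δ →
        ∃ u' ∈ U, y + h • f y u' ∈ Ω ∧ ‖u' - u‖ < ε := by
  intro x hx u hu hxu ε hε
  have hg : ContinuousWithinAt (fun y => y + h • f y u) (closure Ω) x := by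
    have h1 : ContinuousWithinAt (fun y : EuclideanSpace ℝ (Fin d) => f y u)
        (closure Ω) x := by
      exact ContinuousWithinAt.comp (f := fun y : EuclideanSpace ℝ (Fin d) => (y, u))
        (g := fun p : EuclideanSpace ℝ (Fin d) × (Fin m → ℝ) => f p.1 p.2)
        (hf (x, u) ⟨hx, hu⟩)
        ((continuous_id.prodMk continuous_const).continuousWithinAt)
        (fun y hy => ⟨hy, hu⟩)
    exact continuousWithinAt_id.add (h1.const_smul h)
  have := hg (hΩo.mem_nhds hxu)
  rw [Filter.mem_map, Metric.mem_nhdsWithin_iff] at this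
  obtain ⟨δ, hδ, hδ'⟩ := this
  refine ⟨δ, hδ, fun y hy hyx => ⟨u, hu, ?_, by simpa using hε⟩⟩
  exact hδ' ⟨by simpa [Metric.mem_ball, dist_eq_norm] using hyx, hy⟩
end
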